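/- Let 𝒪 ⊆ ℂ be open, x₀ ∈ 𝒪, let φ: 𝒪 → ℂ be holomorphic, let C: 𝒪 → ℂ be continuous and nonvanishing, and let ε: (0,∞) × 𝒪 → ℂ be a function such that ε(ħ, x) → 0 as ħ → 0⁺ uniformly for x in some neighborhood of x₀. Define J(ħ, x) := (C(x)/(2πħ)) · exp(i·φ(x)/(2πħ)) · (1 + ε(ħ, x)). Then for every natural number N, lim_{ħ→0⁺} J(ħ, x₀ + 2πNħ) / J(ħ, x₀) = exp(i·N·φ′(x₀)). -/

import Mathlib

/-!
Write `a(ℏ) = x₀ + N·(2πℏ)`. The factors `1/(2πℏ)` cancel in the quotient, which then splits as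
`C(a)/C(x₀) · exp(i (φ(a) - φ(x₀))/(2πℏ)) · (1 + ε(ℏ, a))/(1 + ε(ℏ, x₀))`.
The first factor tends to `1` by continuity of `C` and `C(x₀) ≠ 0`, the exponent is `i` times a
difference quotient of `φ` with step `2πℏ`, so tends to `i N φ'(x₀)`, and the last factor tends to
`1` because `ε(ℏ, ·) → 0` uniformly near `x₀` while `a(ℏ) → x₀`.
-/

open Real Filter

/-- The Jones function with semiclassical expansion
`J(ℏ, x) = (C(x)/(2πℏ)) exp(i φ(x)/(2πℏ)) (1 + ε(ℏ, x))`. -/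
noncomputable def Jfun (C φ : ℂ → ℂ) (ε : ℝ → ℂ → ℂ) (hb : ℝ) (x : ℂ) : ℂ :=
  (C x / (2 * (π : ℂ) * (hb : ℂ))) *
    Complex.exp (Complex.I * φ x / (2 * (π : ℂ) * (hb : ℂ))) * (1 + ε hb x)

open Topology

theorem HasDerivAt.tendsto_sub_div_of_mul {𝕜 : Type*} [NontriviallyNormedField 𝕜]
    {f : 𝕜 → 𝕜} {f' x : 𝕜} (hf : HasDerivAt f f' x) (c : 𝕜) :
    Tendsto (fun t => (f (x + c * t) - f x) / t) (𝓝[≠] 0) (𝓝 (c * f')) := by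
  have hline : HasDerivAt (fun t => x + c * t) c 0 := by
    simpa using ((hasDerivAt_id (0 : 𝕜)).const_mul c).const_add x
  have hcomp := (hf.comp_of_eq (0 : 𝕜) hline (by simp)).tendsto_slope_zero
  simpa [div_eq_inv_mul, mul_comm c] using hcomp

theorem tendsto_const_mul_ofReal_nhdsGT_zero {c : ℂ} (hc : c ≠ 0) :
    Tendsto (fun r : ℝ => c * r) (𝓝[>] 0) (𝓝[≠] 0) := by
  refine tendsto_nhdsWithin_iff.mpr ⟨?_, ?_⟩
  · have hcont : Continuous fun r : ℝ => c * r := by fun_prop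
    simpa using (hcont.tendsto 0).mono_left nhdsWithin_le_nhds
  · filter_upwards [self_mem_nhdsWithin] with r (hr : 0 < r)
    simp [hc, hr.ne']

/-- With `x / 0 = 0` this also holds where `Jfun C φ ε hb x = 0`. -/
theorem Jfun_div_Jfun (C φ : ℂ → ℂ) (ε : ℝ → ℂ → ℂ) {hb : ℝ} (hb0 : hb ≠ 0) (x y : ℂ) :
    Jfun C φ ε hb y / Jfun C φ ε hb x =
      C y / C x * Complex.exp (Complex.I * ((φ y - φ x) / (2 * π * hb))) *
        ((1 + ε hb y) / (1 + ε hb x)) := by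
  have h2πhb : (2 * π * hb : ℂ) ≠ 0 := by simp [pi_ne_zero, hb0]
  rw [Jfun, Jfun, mul_div_mul_comm, mul_div_mul_comm, div_div_div_cancel_right₀ h2πhb,
    ← Complex.exp_sub, mul_div_assoc, mul_div_assoc, ← mul_sub, sub_div]

theorem stmt_11 (𝒪 : Set ℂ) (h𝒪 : IsOpen 𝒪) (x₀ : ℂ) (hx₀ : x₀ ∈ 𝒪)
    (φ C : ℂ → ℂ) (hφ : DifferentiableOn ℂ φ 𝒪)
    (hC : ContinuousOn C 𝒪) (hC0 : ∀ x ∈ 𝒪, C x ≠ 0)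
    (ε : ℝ → ℂ → ℂ)
    (hε : ∃ V ∈ nhds x₀,
      TendstoUniformlyOn (fun hb x => ε hb x) (fun _ => 0)
        (nhdsWithin 0 (Set.Ioi (0 : ℝ))) V)
    (N : ℕ) :
    Tendsto
      (fun hb : ℝ =>
        Jfun C φ ε hb (x₀ + 2 * (π : ℂ) * (N : ℂ) * (hb : ℂ)) / Jfun C φ ε hb x₀)
      (nhdsWithin 0 (Set.Ioi (0 : ℝ)))
      (nhds (Complex.exp (Complex.I * (N : ℂ) * deriv φ x₀))) := by
  obtain ⟨V, hV, hεV⟩ := hε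
  have hO : 𝒪 ∈ 𝓝 x₀ := h𝒪.mem_nhds hx₀
  have hstep := tendsto_const_mul_ofReal_nhdsGT_zero (c := 2 * π) (by simp [pi_ne_zero])
  have hshift : Tendsto (fun hb : ℝ => x₀ + N * (2 * π * hb)) (𝓝[>] 0) (𝓝 x₀) := by
    simpa using tendsto_const_nhds.add
      (tendsto_const_nhds.mul (tendsto_nhds_of_tendsto_nhdsWithin hstep))
  have hεlim : ∀ g : ℝ → ℂ, Tendsto g (𝓝[>] 0) (𝓝 x₀) →
      Tendsto (fun hb => 1 + ε hb (g hb)) (𝓝[>] 0) (𝓝 1) := fun g hg => by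
    simpa using tendsto_const_nhds.add
      (hεV.tendsto_comp continuousWithinAt_const (by rwa [nhdsWithin_eq_nhds.mpr hV]))
  have hClim : Tendsto (fun hb : ℝ => C (x₀ + N * (2 * π * hb)) / C x₀) (𝓝[>] 0) (𝓝 1) := by
    simpa [hC0 x₀ hx₀] using ((hC.continuousAt hO).tendsto.comp hshift).div_const (C x₀)
  have hφlim : Tendsto
      (fun hb : ℝ => Complex.exp (Complex.I * ((φ (x₀ + N * (2 * π * hb)) - φ x₀) / (2 * π * hb))))
      (𝓝[>] 0) (𝓝 (Complex.exp (Complex.I * (N * deriv φ x₀)))) :=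
    (Complex.continuous_exp.tendsto _).comp <| tendsto_const_nhds.mul <|
      ((hφ.differentiableAt hO).hasDerivAt.tendsto_sub_div_of_mul N).comp hstep
  have hεratio : Tendsto (fun hb : ℝ => (1 + ε hb (x₀ + N * (2 * π * hb))) / (1 + ε hb x₀))
      (𝓝[>] 0) (𝓝 1) := by
    simpa [Pi.div_def] using (hεlim _ hshift).div (hεlim _ tendsto_const_nhds) one_ne_zero
  have hlim := (hClim.mul hφlim).mul hεratio
  rw [one_mul, mul_one, ← mul_assoc] at hlim
  refine hlim.congr' ?_
  filter_upwards [self_mem_nhdsWithin] with hb (hb0 : 0 < hb)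
  rw [Jfun_div_Jfun C φ ε hb0.ne', show (2 * π * N * hb : ℂ) = N * (2 * π * hb) by ring]
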